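/- arXiv:1801.01055 — 2 statements merged into one kernel-verified Lean document; each statement's English description precedes it below -/
import Mathlib

section
/- For every prime power q and every integer k with 1 ≤ k ≤ q/2 + 1, one has μ^sym_q(k) ≤ 2k − 1. -/
open scoped BigOperators

/-- The symmetric bilinear complexity of a finite-dimensional commutative `F`-algebra `A`:
the smallest `n` for which there are linear forms `α i : A →ₗ[F] F` and elements `w i : A`
with `x * y = ∑ i, (α i x * α i y) • w i` for all `x y`. -/
noncomputable def symBilinearComplexity (F : Type*) [Field F] (A : Type*) [CommRing A]
    [Algebra F A] : ℕ :=
  sInf {n : ℕ | ∃ (α : Fin n → (A →ₗ[F] F)) (w : Fin n → A),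
    ∀ x y : A, x * y = ∑ i, (α i x * α i y) • w i}

/-- The (classical, possibly asymmetric) bilinear complexity of a finite-dimensional
commutative `F`-algebra `A`. -/
noncomputable def bilinearComplexity (F : Type*) [Field F] (A : Type*) [CommRing A]
    [Algebra F A] : ℕ :=
  sInf {n : ℕ | ∃ (α β : Fin n → (A →ₗ[F] F)) (w : Fin n → A),
    ∀ x y : A, x * y = ∑ i, (α i x * β i y) • w i}

/-- The Dedekind psi function `ψ(N) = N * ∏_{l | N, l prime} (1 + 1/l)`. -/
noncomputable def dedekindPsi (N : ℕ) : ℝ :=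
  (N : ℝ) * ∏ l ∈ N.primeFactors, (1 + 1 / (l : ℝ))

/-- `⌈x⌉_{ψ(ℕ∖pℕ)}`: the smallest integer `n ≥ x` of the form `n = ψ(N)` for some
positive integer `N` not divisible by `p`. -/
noncomputable def psiCeil (p : ℕ) (x : ℝ) : ℕ :=
  sInf {n : ℕ | x ≤ (n : ℝ) ∧ ∃ N : ℕ, 0 < N ∧ ¬ p ∣ N ∧ (n : ℝ) = dedekindPsi N}

/-- `⌈y⌉_P`: the smallest prime number `≥ y`. -/
noncomputable def primeCeil (y : ℝ) : ℕ :=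
  sInf {n : ℕ | n.Prime ∧ y ≤ (n : ℝ)}

/-- `ε_P(x) = sup_{y ≥ x} (⌈y⌉_P − y) / y`. -/
noncomputable def epsP (x : ℝ) : ℝ :=
  sSup {z : ℝ | ∃ y : ℝ, x ≤ y ∧ z = ((primeCeil y : ℝ) - y) / y}

open Polynomial

lemma interp_key {F : Type*} [Field F] {m : ℕ} (v : Fin m → F) (hv : Function.Injective v)
    (R : F[X]) (hR : R.natDegree ≤ m) :
    R = C (R.coeff m) * Lagrange.nodal Finset.univ v
      + ∑ i, C (R.eval (v i)) * Lagrange.basis Finset.univ v i := by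
  classical
  set g := Lagrange.nodal (Finset.univ : Finset (Fin m)) v with hg
  have hcard : (Finset.univ : Finset (Fin m)).card = m := Finset.card_fin m
  have hgdeg : g.natDegree = m := by rw [hg, Lagrange.natDegree_nodal, hcard]
  have hgmonic : g.Monic := Lagrange.nodal_monic
  set D := R - C (R.coeff m) * g with hD
  have hDdeg : D.degree < (m : ℕ) := by
    rw [Polynomial.degree_lt_iff_coeff_zero]
    intro j hj
    rcases eq_or_lt_of_le hj with h | h
    · have hgm : g.coeff m = 1 := by
        have := hgmonic.coeff_natDegree
        rwa [hgdeg] at this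
      simp [hD, ← h, hgm]
    · have h1 : R.coeff j = 0 := coeff_eq_zero_of_natDegree_lt (hR.trans_lt h)
      have h2 : g.coeff j = 0 := coeff_eq_zero_of_natDegree_lt (hgdeg.le.trans_lt h)
      simp [hD, h1, h2]
  have hinj : Set.InjOn v (Finset.univ : Finset (Fin m)) := hv.injOn
  have hint := Lagrange.eq_interpolate hinj (by rwa [hcard])
  have heval : ∀ i : Fin m, D.eval (v i) = R.eval (v i) := by
    intro i
    simp [hD, hg, Lagrange.eval_nodal_at_node (Finset.mem_univ i)]
  have : R = C (R.coeff m) * g + D := by rw [hD]; ring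
  conv_lhs => rw [this]
  congr 1
  rw [hint, Lagrange.interpolate_apply]
  exact Finset.sum_congr rfl fun i _ => by rw [heval]

/-- The linear map sending `x : K` to its polynomial representative of degree `< pb.dim`
with respect to a power basis. -/
noncomputable def polyRep {F K : Type*} [Field F] [Field K] [Algebra F K]
    (pb : PowerBasis F K) : K →ₗ[F] F[X] where
  toFun x := ∑ j : Fin pb.dim, C (pb.basis.repr x j) * X ^ (j : ℕ)
  map_add' x y := by
    simp [map_add, add_mul, Finset.sum_add_distrib]
  map_smul' c x := by
    simp [Finset.smul_sum, map_smul, C_mul, mul_assoc, Polynomial.smul_eq_C_mul]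

lemma polyRep_apply {F K : Type*} [Field F] [Field K] [Algebra F K]
    (pb : PowerBasis F K) (x : K) :
    polyRep pb x = ∑ j : Fin pb.dim, C (pb.basis.repr x j) * X ^ (j : ℕ) := rfl

lemma polyRep_natDegree_le {F K : Type*} [Field F] [Field K] [Algebra F K]
    (pb : PowerBasis F K) (x : K) : (polyRep pb x).natDegree ≤ pb.dim - 1 := by
  rw [polyRep_apply]
  refine Polynomial.natDegree_sum_le_of_forall_le _ _ fun j _ => ?_
  refine (Polynomial.natDegree_C_mul_le _ _).trans ?_
  rw [Polynomial.natDegree_X_pow]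
  have := j.2
  omega

lemma polyRep_aeval {F K : Type*} [Field F] [Field K] [Algebra F K]
    (pb : PowerBasis F K) (x : K) : aeval pb.gen (polyRep pb x) = x := by
  rw [polyRep_apply]
  conv_rhs => rw [← pb.basis.sum_repr x]
  simp [PowerBasis.coe_basis, Algebra.smul_def, map_sum]

theorem stmt_1 (q : ℕ) (hq : IsPrimePow q)
    (F : Type*) [Field F] [Fintype F] (hF : Fintype.card F = q)
    (K : Type*) [Field K] [Algebra F K]
    (k : ℕ) (hk1 : 1 ≤ k) (hk2 : (k : ℝ) ≤ (q : ℝ) / 2 + 1)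
    (hdeg : Module.finrank F K = k) :
    symBilinearComplexity F K ≤ 2 * k - 1 := by
  classical
  have hfd : FiniteDimensional F K := FiniteDimensional.of_finrank_pos (by rw [hdeg]; omega)
  have hfin : Finite K := Module.finite_of_finite F
  obtain ⟨pb⟩ : Nonempty (PowerBasis F K) := ⟨Field.powerBasisOfFiniteOfSeparable F K⟩
  have hdim : pb.dim = k := by rw [← pb.finrank, hdeg]
  have hPdeg : ∀ x : K, (polyRep pb x).natDegree ≤ k - 1 := fun x =>
    (polyRep_natDegree_le pb x).trans (by omega)
  -- choose 2k-2 distinct points in F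
  set m := 2 * k - 2 with hmdef
  have hcardF : m ≤ Fintype.card F := by
    have : (2 * k : ℝ) ≤ (q : ℝ) + 2 := by linarith
    have h2 : (2 * k : ℕ) ≤ q + 2 := by exact_mod_cast this
    omega
  obtain ⟨e⟩ : Nonempty (Fin m ↪ F) :=
    Function.Embedding.nonempty_of_card_le (by simpa using hcardF)
  have hv : Function.Injective (e : Fin m → F) := e.injective
  refine Nat.sInf_le ?_
  rw [show 2 * k - 1 = m + 1 by omega]
  refine ⟨Fin.snoc (fun i => (Polynomial.leval (e i)).comp (polyRep pb))
      ((Polynomial.lcoeff F (k - 1)).comp (polyRep pb)),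
    Fin.snoc (fun i => aeval pb.gen (Lagrange.basis Finset.univ e i))
      (aeval pb.gen (Lagrange.nodal Finset.univ e)),
    fun x y => ?_⟩
  have hprod : (polyRep pb x * polyRep pb y).natDegree ≤ m := by
    refine Polynomial.natDegree_mul_le.trans ?_
    have := hPdeg x; have := hPdeg y; omega
  have hkey := interp_key (e : Fin m → F) hv (polyRep pb x * polyRep pb y) hprod
  have hcoeff : (polyRep pb x * polyRep pb y).coeff m
      = (polyRep pb x).coeff (k - 1) * (polyRep pb y).coeff (k - 1) := by
    rw [show m = (k - 1) + (k - 1) by omega]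
    exact Polynomial.coeff_mul_add_eq_of_natDegree_le (hPdeg x) (hPdeg y)
  calc x * y = aeval pb.gen (polyRep pb x) * aeval pb.gen (polyRep pb y) := by
        rw [polyRep_aeval, polyRep_aeval]
    _ = aeval pb.gen (polyRep pb x * polyRep pb y) := (map_mul _ _ _).symm
    _ = _ := by
        rw [hkey, map_add, map_sum, Fin.sum_univ_castSucc]
        simp only [Fin.snoc_castSucc, Fin.snoc_last, LinearMap.comp_apply,
          Polynomial.leval_apply, Polynomial.lcoeff_apply, map_mul, aeval_C,
          Algebra.smul_def, hcoeff, Polynomial.eval_mul]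
        rw [add_comm]
end

section
/- For every prime power q and every integer l with 1 ≤ l ≤ q/2 + 1, one has M̂^sym_q(l) ≤ 2l − 1. -/
open scoped BigOperators

open Polynomial

lemma key_poly {F : Type*} [Field F] {m l : ℕ} (hm : m = 2 * l - 2) (hl : 1 ≤ l)
    (e : Fin m → F) (he : Function.Injective e)
    (p r : F[X]) (hp : p.degree < (l : ℕ)) (hr : r.degree < (l : ℕ)) :
    p * r = C (p.coeff (l-1) * r.coeff (l-1)) * Lagrange.nodal Finset.univ e
      + ∑ i : Fin m, C (p.eval (e i) * r.eval (e i)) * Lagrange.basis Finset.univ e i := by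
  have hpd : p.natDegree ≤ l - 1 := by
    rcases eq_or_ne p 0 with rfl | h
    · simp
    · have := (Polynomial.natDegree_lt_iff_degree_lt h).2 hp
      omega
  have hrd : r.natDegree ≤ l - 1 := by
    rcases eq_or_ne r 0 with rfl | h
    · simp
    · have := (Polynomial.natDegree_lt_iff_degree_lt h).2 hr
      omega
  set c := p.coeff (l-1) * r.coeff (l-1) with hc
  set N : F[X] := Lagrange.nodal Finset.univ e with hN
  have hmm : m = (l - 1) + (l - 1) := by omega
  have hprc : (p * r).coeff m = c := by
    rw [hmm]; exact Polynomial.coeff_mul_add_eq_of_natDegree_le hpd hrd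
  have hNdeg : N.degree = (m : WithBot ℕ) := by
    rw [hN, Lagrange.degree_nodal]; simp
  have hNnat : N.natDegree = m := by
    rw [hN, Lagrange.natDegree_nodal]; simp
  have hNmonic : N.Monic := Lagrange.nodal_monic
  have hprdeg : (p * r).degree ≤ (m : WithBot ℕ) := by
    calc (p * r).degree ≤ p.degree + r.degree := Polynomial.degree_mul_le _ _
    _ ≤ ((l - 1 : ℕ) : WithBot ℕ) + ((l - 1 : ℕ) : WithBot ℕ) := by
        exact add_le_add (Polynomial.degree_le_natDegree.trans (by exact_mod_cast hpd))
          (Polynomial.degree_le_natDegree.trans (by exact_mod_cast hrd))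
    _ = (m : WithBot ℕ) := by rw [hmm]; exact_mod_cast (Nat.cast_add _ _).symm
  set f : F[X] := p * r - C c * N with hf
  have hfdeg : f.degree < (m : WithBot ℕ) := by
    have hle : f.degree ≤ (m : WithBot ℕ) :=
      le_trans (Polynomial.degree_sub_le _ _) (max_le hprdeg (le_trans
        (Polynomial.degree_mul_le _ _) (by
          rw [hNdeg]
          calc (C c).degree + (m : WithBot ℕ) ≤ 0 + (m : WithBot ℕ) :=
            add_le_add_left Polynomial.degree_C_le _
          _ = (m : WithBot ℕ) := zero_add _)))
    have hcoeff : f.coeff m = 0 := by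
      rw [hf, Polynomial.coeff_sub, hprc, Polynomial.coeff_C_mul, ← hNnat,
        hNmonic.coeff_natDegree, mul_one, sub_self]
    rcases lt_or_eq_of_le hle with h | h
    · exact h
    · exfalso
      have hf0 : f ≠ 0 := fun h0 => by simp [h0] at h
      have : f.natDegree = m := Polynomial.natDegree_eq_of_degree_eq_some h
      rw [← this] at hcoeff
      exact hf0 (Polynomial.leadingCoeff_eq_zero.1 hcoeff)
  have hinj : Set.InjOn e ↑(Finset.univ : Finset (Fin m)) := fun a _ b _ h => he h
  have hcard : ((Finset.univ : Finset (Fin m)).card : WithBot ℕ) = (m : WithBot ℕ) := by simp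
  have hfi := Lagrange.eq_interpolate hinj (by rw [hcard]; exact hfdeg)
  have heval : ∀ i : Fin m, f.eval (e i) = p.eval (e i) * r.eval (e i) := by
    intro i
    rw [hf]
    simp [Lagrange.eval_nodal_at_node (Finset.mem_univ i)]
    exact Or.inr (Lagrange.eval_nodal_at_node (Finset.mem_univ i))
  have : f = ∑ i : Fin m, C (p.eval (e i) * r.eval (e i)) * Lagrange.basis Finset.univ e i := by
    rw [hfi, Lagrange.interpolate_apply]
    exact Finset.sum_congr rfl fun i _ => by rw [heval]
  have := this
  rw [hf, sub_eq_iff_eq_add] at this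
  rw [this]; ring

theorem stmt_16 (q : ℕ) (hq : IsPrimePow q)
    (F : Type*) [Field F] [Fintype F] (hF : Fintype.card F = q)
    (l : ℕ) (hl1 : 1 ≤ l) (hl2 : (l : ℝ) ≤ (q : ℝ) / 2 + 1) :
    symBilinearComplexity F
        (Polynomial F ⧸ Ideal.span {(Polynomial.X : Polynomial F) ^ l}) ≤ 2 * l - 1 := by
  classical
  set m := 2 * l - 2 with hm
  have hcard : m ≤ Fintype.card F := by
    rw [hF]
    have h2 : (2 * l : ℝ) ≤ (q : ℝ) + 2 := by linarith
    have h3 : 2 * l ≤ q + 2 := by exact_mod_cast h2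
    omega
  obtain ⟨e⟩ : Nonempty (Fin m ↪ F) := by
    apply Function.Embedding.nonempty_of_card_le
    simpa using hcard
  have hmonic : ((X : F[X]) ^ l).Monic := monic_X_pow l
  set g : F[X] := (X : F[X]) ^ l with hg
  -- the quotient, viewed as AdjoinRoot
  let σ : AdjoinRoot g →ₗ[F] F[X] := AdjoinRoot.modByMonicHom hmonic
  let π : F[X] →+* AdjoinRoot g := AdjoinRoot.mk g
  let α : Fin (m + 1) → (AdjoinRoot g →ₗ[F] F) :=
    Fin.lastCases ((Polynomial.lcoeff F (l - 1)).comp σ)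
      (fun i => (Polynomial.leval (e i)).comp σ)
  let w : Fin (m + 1) → AdjoinRoot g :=
    Fin.lastCases (π (Lagrange.nodal Finset.univ e))
      (fun i => π (Lagrange.basis Finset.univ e i))
  have hdegσ : ∀ x : AdjoinRoot g, (σ x).degree < (l : ℕ) := by
    intro x
    obtain ⟨p, rfl⟩ := AdjoinRoot.mk_surjective x
    rw [show σ (AdjoinRoot.mk g p) = p %ₘ g from AdjoinRoot.modByMonicHom_mk hmonic p]
    have := Polynomial.degree_modByMonic_lt p hmonic
    rwa [hg, Polynomial.degree_X_pow] at this
  have hσπ : ∀ x : AdjoinRoot g, π (σ x) = x := AdjoinRoot.mk_leftInverse hmonic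
  have hsmul : ∀ (a : F) (b : F[X]), π (C a * b) = a • π b := by
    intro a b
    rw [Algebra.smul_def, AdjoinRoot.algebraMap_eq, map_mul]
    rfl
  have key : ∀ x y : AdjoinRoot g, x * y = ∑ i, (α i x * α i y) • w i := by
    intro x y
    have hpr := key_poly hm hl1 e e.injective (σ x) (σ y) (hdegσ x) (hdegσ y)
    calc x * y = π (σ x) * π (σ y) := by rw [hσπ, hσπ]
    _ = π (σ x * σ y) := (map_mul π _ _).symm
    _ = π (C ((σ x).coeff (l-1) * (σ y).coeff (l-1)) * Lagrange.nodal Finset.univ e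
          + ∑ i : Fin m, C ((σ x).eval (e i) * (σ y).eval (e i))
            * Lagrange.basis Finset.univ e i) := by rw [← hpr]
    _ = ∑ i, (α i x * α i y) • w i := by
        rw [map_add, map_sum, Fin.sum_univ_castSucc, add_comm]
        congr 1
        · refine Finset.sum_congr rfl fun i _ => ?_
          rw [hsmul]
          simp [α, w]
        · rw [hsmul]
          simp [α, w]
  have hmem : m + 1 ∈ {n : ℕ | ∃ (α : Fin n → (AdjoinRoot g →ₗ[F] F)) (w : Fin n → AdjoinRoot g),
      ∀ x y : AdjoinRoot g, x * y = ∑ i, (α i x * α i y) • w i} := ⟨α, w, key⟩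
  have : symBilinearComplexity F (AdjoinRoot g) ≤ m + 1 := Nat.sInf_le hmem
  have hml : m + 1 = 2 * l - 1 := by omega
  rw [hml] at this
  exact this
end
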